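/- arXiv:1804.11096 — 3 statements merged into one kernel-verified Lean document; each statement's English description precedes it below -/
import Mathlib

section
/- The map j sending the upper triangular matrix with rows (a, c, e), (0, 1/(ab), d), (0, 0, b) to the 4×4 matrix with rows (a/b, -2a²d, c/b, 4e/b - 2acd), (0, a²b, 0, abc), (0, 0, 1/(ab²), 2d/b), (0, 0, 0, 1) is a group homomorphism from the Borel subgroup B of SL(3,C) to GL(4,C). -/
open Matrix

/-! An element of `B` is determined by parameters `a, b, c, d, e` with `ab ≠ 0`, and the
product in `B` is an explicit rational law in these parameters; multiplicativity of `j` is then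
an identity of rational functions, checked entrywise. Invertibility needs no computation:
`B` is closed under inversion, so `j(M) j(M⁻¹) = j(1) = 1`. -/

/-- The Borel subgroup `B ⊂ SL(3,ℂ)`: upper triangular complex `3 × 3` matrices of
determinant one, i.e. matrices with rows `(a, c, e), (0, 1/(ab), d), (0, 0, b)`. -/
def BorelB : Set (Matrix (Fin 3) (Fin 3) ℂ) :=
  {M | M.BlockTriangular id ∧ M.det = 1}

/-- The map `j` of the paper, written in terms of the entries
`a = M₀₀, c = M₀₁, e = M₀₂, d = M₁₂, b = M₂₂` of an upper triangular matrix `M`. -/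
noncomputable def Jmap (M : Matrix (Fin 3) (Fin 3) ℂ) : Matrix (Fin 4) (Fin 4) ℂ :=
  let a := M 0 0; let c := M 0 1; let e := M 0 2; let d := M 1 2; let b := M 2 2
  !![a / b, -2 * a ^ 2 * d, c / b, 4 * e / b - 2 * a * c * d;
     0, a ^ 2 * b, 0, a * b * c;
     0, 0, 1 / (a * b ^ 2), 2 * d / b;
     0, 0, 0, 1]

section BorelMatrix

variable {K : Type*} [Field K]

def borelMatrix (a b c d e : K) : Matrix (Fin 3) (Fin 3) K :=
  !![a, c, e; 0, (a * b)⁻¹, d; 0, 0, b]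

theorem borelMatrix_mul (a b c d e a' b' c' d' e' : K) :
    borelMatrix a b c d e * borelMatrix a' b' c' d' e' =
      borelMatrix (a * a') (b * b') (a * c' + c * (a' * b')⁻¹) ((a * b)⁻¹ * d' + d * b')
        (a * e' + c * d' + e * b') := by
  ext i j
  fin_cases i <;> fin_cases j <;> simp [borelMatrix, mul_apply, Fin.sum_univ_three]
  ring

theorem exists_eq_borelMatrix {M : Matrix (Fin 3) (Fin 3) K} (hM : M.BlockTriangular id)
    (hdet : M.det = 1) :
    ∃ a b c d e : K, a ≠ 0 ∧ b ≠ 0 ∧ M = borelMatrix a b c d e := by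
  have hdiag : M 0 0 * M 1 1 * M 2 2 = 1 := by
    rw [← hdet, det_of_isUpperTriangular hM, Fin.prod_univ_three]
  refine ⟨M 0 0, M 2 2, M 0 1, M 1 2, M 0 2, left_ne_zero_of_mul (left_ne_zero_of_mul_eq_one hdiag),
    right_ne_zero_of_mul_eq_one hdiag, ?_⟩
  have h11 : M 1 1 = (M 0 0 * M 2 2)⁻¹ :=
    eq_inv_of_mul_eq_one_right (by linear_combination hdiag)
  ext i j
  fin_cases i <;> fin_cases j <;> simp [borelMatrix, h11]
  all_goals exact hM (by decide)

end BorelMatrix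

theorem inv_mem_BorelB {M : Matrix (Fin 3) (Fin 3) ℂ} (hM : M ∈ BorelB) : M⁻¹ ∈ BorelB := by
  obtain ⟨htri, hdet⟩ := hM
  have := M.invertibleOfIsUnitDet (by simp [hdet])
  exact ⟨blockTriangular_inv_of_blockTriangular htri, by simp [det_nonsing_inv, hdet]⟩

theorem Jmap_borelMatrix_mul {a b a' b' : ℂ} (ha : a ≠ 0) (hb : b ≠ 0) (ha' : a' ≠ 0)
    (hb' : b' ≠ 0) (c d e c' d' e' : ℂ) :
    Jmap (borelMatrix a b c d e * borelMatrix a' b' c' d' e') =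
      Jmap (borelMatrix a b c d e) * Jmap (borelMatrix a' b' c' d' e') := by
  rw [borelMatrix_mul]
  ext i j
  fin_cases i <;> fin_cases j <;> simp [Jmap, borelMatrix, mul_apply, Fin.sum_univ_four] <;>
    field_simp <;> ring

theorem Jmap_mul {M N : Matrix (Fin 3) (Fin 3) ℂ} (hM : M ∈ BorelB) (hN : N ∈ BorelB) :
    Jmap (M * N) = Jmap M * Jmap N := by
  obtain ⟨a, b, c, d, e, ha, hb, rfl⟩ := exists_eq_borelMatrix hM.1 hM.2
  obtain ⟨a', b', c', d', e', ha', hb', rfl⟩ := exists_eq_borelMatrix hN.1 hN.2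
  exact Jmap_borelMatrix_mul ha hb ha' hb' c d e c' d' e'

theorem Jmap_one : Jmap 1 = 1 := by
  ext i j
  fin_cases i <;> fin_cases j <;> simp [Jmap, one_apply]

theorem isUnit_Jmap {M : Matrix (Fin 3) (Fin 3) ℂ} (hM : M ∈ BorelB) : IsUnit (Jmap M) := by
  have hinv : Jmap M * Jmap M⁻¹ = 1 := by
    rw [← Jmap_mul hM (inv_mem_BorelB hM), mul_nonsing_inv M (by simp [hM.2]), Jmap_one]
  exact (isUnit_iff_isUnit_det _).2 (isUnit_det_of_right_inverse hinv)

/-- `j` is a group homomorphism from the Borel subgroup `B` of `SL(3,ℂ)`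
to `GL(4,ℂ)`: it takes values in invertible matrices and is multiplicative. -/
theorem Jmap_hom :
    (∀ M ∈ BorelB, IsUnit (Jmap M)) ∧
    (Jmap 1 = 1) ∧
    (∀ M ∈ BorelB, ∀ N ∈ BorelB, Jmap (M * N) = Jmap M * Jmap N) :=
  ⟨fun _ hM => isUnit_Jmap hM, Jmap_one, fun _ hM _ hN => Jmap_mul hM hN⟩
end

section
/- The kernel of the homomorphism j : B → GL(4,C) (defined by sending the matrix with rows (a,c,e),(0,1/(ab),d),(0,0,b) to the matrix with rows (a/b, -2a²d, c/b, 4e/b - 2acd), (0, a²b, 0, abc), (0, 0, 1/(ab²), 2d/b), (0,0,0,1)) consists exactly of the diagonal matrices diag(ζ, ζ, ζ) with ζ³ = 1, hence is isomorphic to Z/3Z. -/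
open Matrix

/-!
Comparing the entries of `j(M)` with those of the identity: the entry `a²b = 1` makes `a` and `b`
nonzero, `a/b = 1` gives `a = b` and hence `a³ = 1`, and the entries `-2a²d`, `abc` and
`4e/b - 2acd` then force `d = c = e = 0`. Since `M` is upper triangular with determinant one, its
middle diagonal entry is `1/a² = a`. So the kernel is the group of cube roots of unity in `ℂ`,
which has exactly three elements.
-/

lemma Complex.nonempty_equiv_zmod_of_pow_eq_one (n : ℕ) [NeZero n] :
    Nonempty ({ζ : ℂ // ζ ^ n = 1} ≃ ZMod n) := by
  have hcard : Fintype.card (Polynomial.nthRootsFinset n (1 : ℂ)) = n := by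
    rw [Fintype.card_coe, (Complex.isPrimitiveRoot_exp n (NeZero.ne n)).card_nthRootsFinset]
  refine ⟨(Equiv.subtypeEquivRight fun ζ => ?_).trans
    (Fintype.equivOfCardEq (by rw [hcard, ZMod.card]))⟩
  exact (Polynomial.mem_nthRootsFinset (NeZero.pos n) 1).symm

namespace BorelB

variable {M : Matrix (Fin 3) (Fin 3) ℂ}

lemma eq_of_mem (hM : M ∈ BorelB) :
    M = !![M 0 0, M 0 1, M 0 2; 0, M 1 1, M 1 2; 0, 0, M 2 2] := by
  ext i j
  fin_cases i <;> fin_cases j <;> first | rfl | exact hM.1 (by decide)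

lemma diag_prod_eq_one (hM : M ∈ BorelB) : M 0 0 * M 1 1 * M 2 2 = 1 := by
  rw [← hM.2, det_of_isUpperTriangular hM.1, Fin.prod_univ_three]

lemma smul_one_mem {ζ : ℂ} (hζ : ζ ^ 3 = 1) : ζ • (1 : Matrix (Fin 3) (Fin 3) ℂ) ∈ BorelB :=
  ⟨fun _ _ hij => by simp [blockTriangular_one hij], by simpa using hζ⟩

end BorelB

lemma Jmap_smul_one {ζ : ℂ} (hζ : ζ ^ 3 = 1) : Jmap (ζ • 1) = 1 := by
  have hζ0 : ζ ≠ 0 := by rintro rfl; simp at hζ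
  have hinv : 1 / (ζ * ζ ^ 2) = 1 := by rw [← pow_succ', hζ, div_one]
  ext i j
  fin_cases i <;> fin_cases j <;> simp [Jmap, hζ0, hinv, ← pow_succ, hζ]

lemma eq_smul_one_of_Jmap_eq_one {M : Matrix (Fin 3) (Fin 3) ℂ} (hM : M ∈ BorelB)
    (h : Jmap M = 1) : M 0 0 ^ 3 = 1 ∧ M = M 0 0 • 1 := by
  have hdiag := BorelB.diag_prod_eq_one hM
  obtain ⟨a, c, e, m, d, b, rfl⟩ : ∃ a c e m d b, M = !![a, c, e; 0, m, d; 0, 0, b] :=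
    ⟨_, _, _, _, _, _, BorelB.eq_of_mem hM⟩
  have entry : ∀ i j, Jmap !![a, c, e; 0, m, d; 0, 0, b] i j = (1 : Matrix _ _ ℂ) i j := by
    simp [h]
  have h00 := entry 0 0
  have h01 := entry 0 1
  have h03 := entry 0 3
  have h11 := entry 1 1
  have h13 := entry 1 3
  simp [Jmap] at h00 h01 h03 h11 h13 hdiag
  have ha : a ≠ 0 := by rintro rfl; simp at h11
  have hb : b ≠ 0 := by rintro rfl; simp at h11
  obtain rfl : a = b := (div_eq_one_iff_eq hb).1 h00
  have ha3 : a ^ 3 = 1 := by linear_combination h11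
  obtain rfl : d = 0 := h01.resolve_left ha
  obtain rfl : c = 0 := h13.resolve_left (not_or.2 ⟨ha, ha⟩)
  obtain rfl : e = 0 := by simpa [ha] using h03
  obtain rfl : m = a := mul_left_cancel₀ (pow_ne_zero 2 ha) (by linear_combination hdiag - ha3)
  refine ⟨by simpa using ha3, ?_⟩
  ext i j
  fin_cases i <;> fin_cases j <;> simp

lemma Jmap_eq_one_iff {M : Matrix (Fin 3) (Fin 3) ℂ} (hM : M ∈ BorelB) :
    Jmap M = 1 ↔ ∃ ζ : ℂ, ζ ^ 3 = 1 ∧ M = ζ • (1 : Matrix (Fin 3) (Fin 3) ℂ) :=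
  ⟨fun h => ⟨M 0 0, eq_smul_one_of_Jmap_eq_one hM h⟩, by
    rintro ⟨ζ, hζ, rfl⟩
    exact Jmap_smul_one hζ⟩

noncomputable def JmapKernelEquivCubeRoots :
    {M : Matrix (Fin 3) (Fin 3) ℂ // M ∈ BorelB ∧ Jmap M = 1} ≃ {ζ : ℂ // ζ ^ 3 = 1} where
  toFun M := ⟨M.1 0 0, (eq_smul_one_of_Jmap_eq_one M.2.1 M.2.2).1⟩
  invFun ζ := ⟨ζ.1 • 1, BorelB.smul_one_mem ζ.2, Jmap_smul_one ζ.2⟩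
  left_inv M := Subtype.ext (eq_smul_one_of_Jmap_eq_one M.2.1 M.2.2).2.symm
  right_inv ζ := Subtype.ext (by simp)

/-- The kernel of `j : B → GL(4,ℂ)` consists exactly of the scalar matrices
`diag(ζ, ζ, ζ)` with `ζ³ = 1`; hence it is isomorphic to `ℤ/3ℤ`. -/
theorem Jmap_kernel :
    (∀ M ∈ BorelB, (Jmap M = 1 ↔
      ∃ ζ : ℂ, ζ ^ 3 = 1 ∧ M = ζ • (1 : Matrix (Fin 3) (Fin 3) ℂ))) ∧
    Nonempty ({M : Matrix (Fin 3) (Fin 3) ℂ // M ∈ BorelB ∧ Jmap M = 1} ≃ ZMod 3) :=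
  ⟨fun _ => Jmap_eq_one_iff,
    (Complex.nonempty_equiv_zmod_of_pow_eq_one 3).map JmapKernelEquivCubeRoots.trans⟩
end

section
/- The image of the homomorphism j : B → GL(4,C) is exactly the group H of matrices with rows (λ, v¹λ, v²λ, s), (0, a¹, 0, a¹v²), (0, 0, a², -a²v¹), (0, 0, 0, 1) with a¹a² = λ, i.e., j is surjective onto H. -/
/-!
An upper triangular `M ∈ SL(3,ℂ)` with diagonal `(a, 1/(ab), b)`, entries `c, e` in the first row
and `d` above `b` is sent by `j` to the element of `H` with `a¹ = a²b`, `a² = 1/(ab²)`,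
`v¹ = -2abd`, `v² = c/a`. Conversely, any nonzero `(a¹, a²)` has this form once `b` is chosen as a
cube root, and then `c, d, e` are determined linearly by `v², v¹, s`.
-/

open Matrix

def Hset : Set (Matrix (Fin 4) (Fin 4) ℂ) :=
  {M | ∃ s v1 v2 a1 a2 : ℂ, a1 ≠ 0 ∧ a2 ≠ 0 ∧
    M = !![a1 * a2, v1 * (a1 * a2), v2 * (a1 * a2), s;
           0, a1, 0, a1 * v2;
           0, 0, a2, -(a2 * v1);
           0, 0, 0, 1]}

def hMatrix (s v1 v2 a1 a2 : ℂ) : Matrix (Fin 4) (Fin 4) ℂ :=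
  !![a1 * a2, v1 * (a1 * a2), v2 * (a1 * a2), s;
     0, a1, 0, a1 * v2;
     0, 0, a2, -(a2 * v1);
     0, 0, 0, 1]

theorem mem_Hset_iff {X : Matrix (Fin 4) (Fin 4) ℂ} :
    X ∈ Hset ↔ ∃ s v1 v2 a1 a2 : ℂ, a1 ≠ 0 ∧ a2 ≠ 0 ∧ X = hMatrix s v1 v2 a1 a2 :=
  Iff.rfl

theorem mem_BorelB_iff {M : Matrix (Fin 3) (Fin 3) ℂ} :
    M ∈ BorelB ↔ ∃ a c e x d b : ℂ, a * x * b = 1 ∧ M = !![a, c, e; 0, x, d; 0, 0, b] := by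
  constructor
  · rintro ⟨htri, hdet⟩
    have h10 : M 1 0 = 0 := htri (by decide)
    have h20 : M 2 0 = 0 := htri (by decide)
    have h21 : M 2 1 = 0 := htri (by decide)
    refine ⟨M 0 0, M 0 1, M 0 2, M 1 1, M 1 2, M 2 2, ?_, ?_⟩
    · rw [det_fin_three, h10, h20, h21] at hdet
      linear_combination hdet
    · have hM := eta_fin_three M
      rwa [h10, h20, h21] at hM
  · rintro ⟨a, c, e, x, d, b, hdet, rfl⟩
    constructor
    · intro i j hij
      fin_cases i <;> fin_cases j <;> first | rfl | exact absurd hij (by decide)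
    · rw [det_fin_three]
      simp only [of_apply, cons_val', cons_val_zero, cons_val_one, cons_val_two, empty_val',
        cons_val_fin_one, head_cons, head_fin_const, tail_cons]
      linear_combination hdet

theorem Jmap_upperTriangular {a c e x d b : ℂ} (ha : a ≠ 0) (hb : b ≠ 0) :
    Jmap !![a, c, e; 0, x, d; 0, 0, b] =
      hMatrix (4 * e / b - 2 * a * c * d) (-2 * a * b * d) (c / a) (a ^ 2 * b)
        (1 / (a * b ^ 2)) := by
  ext i j
  fin_cases i <;> fin_cases j <;> simp [Jmap, hMatrix] <;> field_simp

/-- Take `b` a cube root of `a₂²/a₁` and `a = a₁b/a₂`. -/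
theorem exists_sq_mul_eq_and_mul_sq_eq {K : Type*} [Field K] [IsAlgClosed K] {a1 a2 : K}
    (ha1 : a1 ≠ 0) (ha2 : a2 ≠ 0) :
    ∃ a b : K, a ≠ 0 ∧ b ≠ 0 ∧ a ^ 2 * b = a1 ∧ a * b ^ 2 = a2 := by
  obtain ⟨b, hb3⟩ := IsAlgClosed.exists_pow_nat_eq (a2 ^ 2 / a1) (n := 3) (by norm_num)
  rw [eq_div_iff ha1] at hb3
  have hb : b ≠ 0 := by
    rintro rfl
    exact pow_ne_zero 2 ha2 (by simpa using hb3.symm)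
  refine ⟨a1 * b / a2, b, by simp [ha1, ha2, hb], hb, ?_, ?_⟩
  · field_simp
    linear_combination hb3
  · field_simp
    linear_combination hb3

/-- The image of `j : B → GL(4,ℂ)` is exactly the group `H`; in particular `j` is
surjective onto `H`. -/
theorem Jmap_image_eq_Hset :
    ∀ X : Matrix (Fin 4) (Fin 4) ℂ, X ∈ Hset ↔ ∃ M ∈ BorelB, Jmap M = X := by
  intro X
  rw [mem_Hset_iff]
  constructor
  · rintro ⟨s, v1, v2, a1, a2, ha1, ha2, rfl⟩
    obtain ⟨a, b, ha, hb, h1, h2⟩ := exists_sq_mul_eq_and_mul_sq_eq ha1 (inv_ne_zero ha2)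
    refine ⟨!![a, a * v2, (b * s - a * v1 * v2) / 4; 0, 1 / (a * b), -v1 / (2 * a * b); 0, 0, b],
      mem_BorelB_iff.2 ⟨_, _, _, _, _, _, by field_simp, rfl⟩, ?_⟩
    rw [Jmap_upperTriangular ha hb, ← h1, h2]
    congr 1 <;> field_simp
    ring
  · rintro ⟨M, hM, rfl⟩
    obtain ⟨a, c, e, x, d, b, hdet, rfl⟩ := mem_BorelB_iff.1 hM
    have ha : a ≠ 0 := by rintro rfl; simp at hdet
    have hb : b ≠ 0 := by rintro rfl; simp at hdet
    rw [Jmap_upperTriangular ha hb]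
    exact ⟨_, _, _, _, _, by simp [ha, hb], by simp [ha, hb], rfl⟩
end
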